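/- arXiv:2108.08431 — 3 statements merged into one kernel-verified Lean document; each statement's English description precedes it below -/
import Mathlib

section
/- Fix vertices w, v of Q, a real number x ≥ 0 (all sums taken in the extended nonnegative reals [0,∞]), and a sequence e₁, …, e_n of crossing arrows such that w ∼ s(e₁), r(e_i) ∼ s(e_{i+1}) for 1 ≤ i < n, and r(e_n) ∼ v (s and r denoting source and range). Let X(e₁⋯e_n, w, v) be the set of paths of the form ν₁e₁ν₂e₂⋯ν_ne_nν_{n+1}, where ν₁ is a path from w to s(e₁), ν_{i+1} is a path from r(e_i) to s(e_{i+1}) for 1 ≤ i < n, and ν_{n+1} is a path from r(e_n) to v. Then Σ_{p ∈ X(e₁⋯e_n,w,v)} x^{|p|} = Z_{w,s(e₁)}(x)·x·Z_{r(e₁),s(e₂)}(x)·x·⋯·x·Z_{r(e_n),v}(x), where Z_{a,b}(x) := Σ_{ν a path from a to b} x^{|ν|}. Moreover, Z_{w,v}(x) equals the sum of Σ_{p ∈ X(e₁⋯e_n,w,v)} x^{|p|} over all such sequences of crossing arrows (including the empty sequence n = 0). -/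
open ENNReal

noncomputable section

variable {Q : Type} [Quiver.{0} Q]

/-- `a ∼ b` : there are directed paths (possibly empty) from `a` to `b` and from `b` to `a`. -/
def QConn (a b : Q) : Prop := Nonempty (Quiver.Path a b) ∧ Nonempty (Quiver.Path b a)

/-- An arrow `e : a ⟶ b` is crossing if `¬(a ∼ b)`. -/
def Crossing {a b : Q} (_e : a ⟶ b) : Prop := ¬ QConn a b

/-- `Z_{a,b}(x) := Σ_{ν a path from a to b} x^{|ν|}`, a sum in `[0,∞]`. -/
def pathZ (a b : Q) (x : ℝ) : ℝ≥0∞ :=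
  ∑' p : Quiver.Path a b, ENNReal.ofReal x ^ p.length

/-- A sequence of crossing arrows `e₁, …, e_n` (from `a` to `d`) such that `a ∼ s(e₁)`,
`r(eᵢ) ∼ s(e_{i+1})` for `1 ≤ i < n`, and `r(e_n) ∼ d` (for `n = 0`, just `a ∼ d`). -/
inductive Chain : Q → Q → Type where
  | nil : ∀ {a b : Q}, QConn a b → Chain a b
  | cons : ∀ {a b c d : Q}, QConn a b → ∀ (e : b ⟶ c), Crossing e → Chain c d → Chain a d

/-- `X(e₁⋯e_n, w, v)`: the set of paths of the form `ν₁e₁ν₂e₂⋯ν_ne_nν_{n+1}` where `ν₁` is a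
path from `w` to `s(e₁)`, `ν_{i+1}` is a path from `r(eᵢ)` to `s(e_{i+1})`, and `ν_{n+1}` is a
path from `r(e_n)` to `v`. -/
def chainSet : ∀ {a d : Q}, Chain a d → Set (Quiver.Path a d)
  | _, _, .nil _ => Set.univ
  | a, d, .cons (b := b) (c := c) _ e _ rest =>
      {p | ∃ (ν : Quiver.Path a b) (q : Quiver.Path c d),
        q ∈ chainSet rest ∧ p = (ν.cons e).comp q}

/-- The product `Z_{w,s(e₁)}(x)·x·Z_{r(e₁),s(e₂)}(x)·x·⋯·x·Z_{r(e_n),v}(x)`. -/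
def chainProd (x : ℝ) : ∀ {a d : Q}, Chain a d → ℝ≥0∞
  | a, d, .nil _ => pathZ a d x
  | a, _, .cons (b := b) _ _ _ rest => pathZ a b x * ENNReal.ofReal x * chainProd x rest

/-!
A crossing arrow `e : b ⟶ c` admits no path back from `c` to `b`. Hence a path between two
vertices of one strongly connected component uses no crossing arrow, and a path splits in exactly
one way as `ν₁ e₁ ν₂ ⋯ e_n ν_{n+1}` with crossing arrows `eᵢ` and every `νᵢ` inside a component.
So the sets `X(e₁⋯e_n, w, v)` partition the paths from `w` to `v`, and each of them is in
bijection with a product of path sets, which turns its weighted sum into the product of the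
corresponding sums `Z`.
-/

open Quiver

theorem QConn.refl (a : Q) : QConn a a := ⟨Reachable.refl a, Reachable.refl a⟩

theorem QConn.symm {a b : Q} (h : QConn a b) : QConn b a := ⟨h.2, h.1⟩

theorem QConn.trans {a b c : Q} (h : QConn a b) (h' : QConn b c) : QConn a c :=
  ⟨Reachable.trans h.1 h'.1, Reachable.trans h'.2 h.2⟩

theorem Crossing.not_reachable {b c : Q} {e : b ⟶ c} (he : Crossing e) : ¬ Reachable c b :=
  fun h => he ⟨e.reachable, h⟩

theorem Crossing.not_qconn {a b c d : Q} {e : b ⟶ c} (he : Crossing e) (ν : Path a b)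
    (q : Path c d) : ¬ QConn a d :=
  fun h => he.not_reachable (q.reachable.trans (Reachable.trans h.2 ν.reachable))

/-- If one split came strictly after the other, the part of the path between them would lead
from the later arrow's target back to its source's component, across a crossing arrow. -/
theorem eq_of_cons_comp_eq_cons_comp {a b₁ c₁ b₂ c₂ d : Q} {ν₁ : Path a b₁} {e₁ : b₁ ⟶ c₁}
    {ν₂ : Path a b₂} {e₂ : b₂ ⟶ c₂} (he₁ : Crossing e₁) (he₂ : Crossing e₂) (hb : QConn b₁ b₂)
    (q₁ : Path c₁ d) (q₂ : Path c₂ d) (h : (ν₁.cons e₁).comp q₁ = (ν₂.cons e₂).comp q₂) :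
    b₁ = b₂ ∧ c₁ = c₂ ∧ ν₁ ≍ ν₂ ∧ e₁ ≍ e₂ ∧ q₁ ≍ q₂ := by
  induction q₁ with
  | nil =>
    cases q₂ with
    | nil =>
      obtain rfl := Path.obj_eq_of_cons_eq_cons h
      exact ⟨rfl, rfl, Path.heq_of_cons_eq_cons h, Path.hom_heq_of_cons_eq_cons h, .rfl⟩
    | cons q₂ f =>
      obtain rfl := Path.obj_eq_of_cons_eq_cons h
      exact (he₂.not_reachable (q₂.reachable.trans hb.1)).elim
  | cons q₁ f ih =>
    cases q₂ with
    | nil =>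
      obtain rfl := Path.obj_eq_of_cons_eq_cons h
      exact (he₁.not_reachable (q₁.reachable.trans hb.2)).elim
    | cons q₂ g =>
      obtain rfl := Path.obj_eq_of_cons_eq_cons h
      obtain ⟨rfl, rfl, hν, he, hq⟩ := ih q₂ (eq_of_heq (Path.heq_of_cons_eq_cons h))
      obtain rfl := eq_of_heq hq
      obtain rfl := eq_of_heq (Path.hom_heq_of_cons_eq_cons h)
      exact ⟨rfl, rfl, hν, he, .rfl⟩

namespace Chain

def chainSetConsEquiv {a b c d : Q} (h : QConn a b) (e : b ⟶ c) (he : Crossing e)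
    (rest : Chain c d) : Path a b × chainSet rest ≃ chainSet (.cons h e he rest) :=
  Equiv.ofBijective (fun s => ⟨(s.1.cons e).comp s.2, s.1, s.2, s.2.2, rfl⟩) <| by
    constructor
    · rintro ⟨ν₁, q₁, hq₁⟩ ⟨ν₂, q₂, hq₂⟩ hEq
      obtain ⟨-, -, hν, -, hq⟩ :=
        eq_of_cons_comp_eq_cons_comp he he (.refl b) q₁ q₂ (congrArg Subtype.val hEq)
      obtain rfl := eq_of_heq hν
      obtain rfl := eq_of_heq hq
      rfl
    · rintro ⟨p, ν, q, hq, rfl⟩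
      exact ⟨(ν, ⟨q, hq⟩), rfl⟩

theorem tsum_chainSet_eq_chainProd (x : ℝ) {a d : Q} (ch : Chain a d) :
    ∑' p : chainSet ch, ENNReal.ofReal x ^ (p : Path a d).length = chainProd x ch := by
  induction ch with
  | @nil a d h => exact tsum_univ fun p : Path a d => ENNReal.ofReal x ^ p.length
  | @cons a b c d h e he rest ih =>
    rw [← (chainSetConsEquiv h e he rest).tsum_eq, ENNReal.tsum_prod', chainProd, ← ih, pathZ,
      ← ENNReal.tsum_mul_right, ← ENNReal.tsum_mul_right]
    refine tsum_congr fun ν => ?_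
    rw [← ENNReal.tsum_mul_left]
    refine tsum_congr fun q => ?_
    show ENNReal.ofReal x ^ ((ν.cons e).comp (q : Path c d)).length = _
    rw [Path.length_comp, Path.length_cons, pow_add, pow_succ]

def snoc : ∀ {a b c : Q}, Chain a b → (e : b ⟶ c) → Crossing e → Chain a c
  | _, _, _, .nil h, e, he => .cons h e he (.nil (.refl _))
  | _, _, _, .cons h f hf rest, e, he => .cons h f hf (rest.snoc e he)

protected def trans : ∀ {a b c : Q}, Chain a b → QConn b c → Chain a c
  | _, _, _, .nil h, h' => .nil (h.trans h')
  | _, _, _, .cons h f hf rest, h' => .cons h f hf (rest.trans h')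

theorem cons_mem_chainSet_snoc {a b c : Q} {ch : Chain a b} {p : Path a b}
    (hp : p ∈ chainSet ch) (e : b ⟶ c) (he : Crossing e) :
    p.cons e ∈ chainSet (ch.snoc e he) := by
  induction ch with
  | nil h => exact ⟨p, .nil, Set.mem_univ _, rfl⟩
  | cons h f hf rest ih =>
    obtain ⟨ν, q, hq, rfl⟩ := hp
    exact ⟨ν, q.cons e, ih hq e he, rfl⟩

theorem cons_mem_chainSet_trans {a b c : Q} {ch : Chain a b} {p : Path a b}
    (hp : p ∈ chainSet ch) (h' : QConn b c) (e : b ⟶ c) :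
    p.cons e ∈ chainSet (ch.trans h') := by
  induction ch with
  | nil h => exact Set.mem_univ _
  | cons h f hf rest ih =>
    obtain ⟨ν, q, hq, rfl⟩ := hp
    exact ⟨ν, q.cons e, ih hq h' e, rfl⟩

theorem exists_mem_chainSet {a d : Q} (p : Path a d) : ∃ ch : Chain a d, p ∈ chainSet ch := by
  induction p with
  | nil => exact ⟨.nil (.refl a), Set.mem_univ _⟩
  | @cons b c p e ih =>
    obtain ⟨ch, hp⟩ := ih
    by_cases h : QConn b c
    · exact ⟨ch.trans h, cons_mem_chainSet_trans hp h e⟩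
    · exact ⟨ch.snoc e h, cons_mem_chainSet_snoc hp e h⟩

theorem eq_of_mem_chainSet {a d : Q} {ch₁ ch₂ : Chain a d} {p : Path a d}
    (h₁ : p ∈ chainSet ch₁) (h₂ : p ∈ chainSet ch₂) : ch₁ = ch₂ := by
  induction ch₁ with
  | nil h =>
    cases ch₂ with
    | nil => rfl
    | cons _ e he _ =>
      obtain ⟨ν, q, -, rfl⟩ := h₂
      exact (he.not_qconn ν q h).elim
  | cons h e he rest ih =>
    cases ch₂ with
    | nil h' =>
      obtain ⟨ν, q, -, rfl⟩ := h₁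
      exact (he.not_qconn ν q h').elim
    | cons h' e' he' rest' =>
      obtain ⟨ν, q, hq, rfl⟩ := h₁
      obtain ⟨ν', q', hq', hp⟩ := h₂
      obtain ⟨rfl, rfl, -, hee, hqq⟩ :=
        eq_of_cons_comp_eq_cons_comp he he' (h.symm.trans h') q q' hp
      obtain rfl := eq_of_heq hee
      obtain rfl := eq_of_heq hqq
      rw [ih hq hq']

def sigmaChainSetEquiv (a d : Q) : (Σ ch : Chain a d, chainSet ch) ≃ Path a d :=
  Equiv.ofBijective (fun s => s.2) <| by
    constructor
    · rintro ⟨ch₁, p, h₁⟩ ⟨ch₂, p₂, h₂⟩ (rfl : p = p₂)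
      obtain rfl := eq_of_mem_chainSet h₁ h₂
      rfl
    · intro p
      obtain ⟨ch, hp⟩ := exists_mem_chainSet p
      exact ⟨⟨ch, p, hp⟩, rfl⟩

end Chain

/-- for each admissible sequence of crossing arrows `e₁⋯e_n`,
`Σ_{p ∈ X(e₁⋯e_n,w,v)} x^{|p|} = Z_{w,s(e₁)}·x·Z_{r(e₁),s(e₂)}·x·⋯·x·Z_{r(e_n),v}`;
moreover `Z_{w,v}(x)` is the sum of these quantities over all such sequences. -/
theorem stmt12 [Fintype Q] [∀ a b : Q, Fintype (a ⟶ b)] (w v : Q) (x : ℝ) (hx : 0 ≤ x) :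
    (∀ ch : Chain w v,
      ∑' p : chainSet ch, ENNReal.ofReal x ^ (p : Quiver.Path w v).length = chainProd x ch) ∧
    pathZ w v x =
      ∑' ch : Chain w v, ∑' p : chainSet ch, ENNReal.ofReal x ^ (p : Quiver.Path w v).length := by
  refine ⟨Chain.tsum_chainSet_eq_chainProd x, ?_⟩
  rw [pathZ, ← (Chain.sigmaChainSetEquiv w v).tsum_eq]
  exact ENNReal.tsum_sigma' fun (s : Σ ch : Chain w v, chainSet ch) =>
    ENNReal.ofReal x ^ (s.2 : Path w v).length
end
end

section
/- Let β > 0 and suppose h : V → ℝ is a nonzero vector with nonnegative entries satisfying A·h = e^β·h. Then: (a) there exists a minimal strongly connected component C with ρ(A_C) = e^β; (b) for every strongly connected component C with ρ(A_C) > e^β, h vanishes on C; and (c) for every strongly connected component C with ρ(A_C) = e^β that is not minimal, h vanishes on C. -/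
open Filter Topology ENNReal

noncomputable section

/-- Every subset of a finite type is a `Fintype` (classically). -/
noncomputable def setFintypeAux {V : Type*} [Fintype V] (S : Set V) : Fintype S :=
  S.toFinite.fintype

attribute [local instance] setFintypeAux

variable {V : Type*} [Fintype V] [DecidableEq V]

/-- `v ⟶* w` : some power of `A` has a positive `(v,w)` entry. -/
def Reaches (A : Matrix V V ℝ) (v w : V) : Prop := ∃ k : ℕ, 0 < (A ^ k) v w

/-- The spectral radius of a real matrix: the largest absolute value of a complex
eigenvalue. -/
def specRad (A : Matrix V V ℝ) : ℝ :=
  sSup {r : ℝ | ∃ μ ∈ spectrum ℂ (A.map fun t : ℝ => (t : ℂ)), r = ‖μ‖}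

/-- The `S × S` submatrix of `A`. -/
def subMat (A : Matrix V V ℝ) (S : Set V) : Matrix S S ℝ :=
  A.submatrix Subtype.val Subtype.val

/-- `ρ(A_S)`. -/
def specRadSub (A : Matrix V V ℝ) (S : Set V) : ℝ := specRad (subMat A S)

/-- The strongly connected component of `v`. -/
def sccOf (A : Matrix V V ℝ) (v : V) : Set V := {u | Reaches A v u ∧ Reaches A u v}

/-- `C` is a strongly connected component. -/
def IsSCC (A : Matrix V V ℝ) (C : Set V) : Prop := ∃ v : V, C = sccOf A v

/-- `C` is a minimal strongly connected component: every other component `C'` that reaches `C`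
has strictly smaller spectral radius. -/
def IsMinSCC (A : Matrix V V ℝ) (C : Set V) : Prop :=
  IsSCC A C ∧ ∀ C' : Set V, IsSCC A C' → C' ≠ C →
    (∃ v' ∈ C', ∃ u ∈ C, Reaches A v' u) → specRadSub A C' < specRadSub A C

/-- `Z_{w,v}(x) := Σ_{k=0}^∞ x^k (A^k)_{w,v} ∈ [0,∞]`. -/
def Zfun (A : Matrix V V ℝ) (w v : V) (x : ℝ) : ℝ≥0∞ :=
  ∑' k : ℕ, ENNReal.ofReal (x ^ k * (A ^ k) w v)

/-- `Z_v(x) := Σ_{w ∈ V} Z_{w,v}(x)`. -/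
def Zvert (A : Matrix V V ℝ) (v : V) (x : ℝ) : ℝ≥0∞ := ∑ w : V, Zfun A w v x

/-!
Since `A ≥ 0` and `A h = e^β h`, the support of `h` is closed under `⟶*`-predecessors. On a set
`C` inside the support, `h|_C` is a positive vector with `A_C h|_C ≤ e^β h|_C`, so by the
Collatz–Wielandt bound `ρ(A_C) ≤ e^β`, with strict inequality when `C` is strongly connected and
has an edge leaving `C` into the support. Every component reaching a component `C` of the support
lies in the support and has such an exit edge (towards `C`), which gives (b) and (c). For (a), a
component of the support that is minimal for `⟶*` has no exit edge into the support, so `h|_C` is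
an eigenvector of `A_C` and `ρ(A_C) = e^β`.
-/

open Matrix

lemma Matrix.mem_spectrum_iff_exists_mulVec_eq_smul {K n : Type*} [Field K] [Fintype n]
    [DecidableEq n] (M : Matrix n n K) (μ : K) :
    μ ∈ spectrum K M ↔ ∃ x ≠ 0, M *ᵥ x = μ • x := by
  simp only [← spectrum_toLin', ← Module.End.hasEigenvalue_iff_mem_spectrum,
    Module.End.HasEigenvalue, Module.End.HasUnifEigenvalue, Submodule.ne_bot_iff,
    Module.End.mem_genEigenspace_one, toLin'_apply]
  exact exists_congr fun _ => and_comm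

section Nonneg

variable {n : Type*} [Fintype n] {B : Matrix n n ℝ}

lemma mulVec_mono (hB : ∀ i j, 0 ≤ B i j) {x y : n → ℝ} (hxy : x ≤ y) : B *ᵥ x ≤ B *ᵥ y :=
  fun i => dotProduct_le_dotProduct_of_nonneg_left hxy (hB i)

lemma exists_le_smul_eq {g z : n → ℝ} (hg : ∀ i, 0 < g i) (hz : 0 ≤ z) (hz0 : z ≠ 0) :
    ∃ c > 0, ∃ i₀, z ≤ c • g ∧ z i₀ = c * g i₀ := by
  obtain ⟨j, hj⟩ := Function.ne_iff.mp hz0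
  have : Nonempty n := ⟨j⟩
  obtain ⟨i₀, -, hmax⟩ := Finset.univ.exists_max_image (fun i => z i / g i) Finset.univ_nonempty
  refine ⟨z i₀ / g i₀, ?_, i₀, fun i => ?_, (div_mul_cancel₀ _ (hg i₀).ne').symm⟩
  · exact (div_pos ((hz j).lt_of_ne' hj) (hg j)).trans_le (hmax j (Finset.mem_univ j))
  · rw [Pi.smul_apply, smul_eq_mul, ← div_le_iff₀ (hg i)]
    exact hmax i (Finset.mem_univ i)

lemma le_of_smul_le_mulVec (hB : ∀ i j, 0 ≤ B i j) {g : n → ℝ} (hg : ∀ i, 0 < g i) {r : ℝ}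
    (hBg : B *ᵥ g ≤ r • g) {z : n → ℝ} (hz : 0 ≤ z) (hz0 : z ≠ 0) {s : ℝ}
    (hBz : s • z ≤ B *ᵥ z) : s ≤ r := by
  obtain ⟨c, hc, i₀, hzc, hi₀⟩ := exists_le_smul_eq hg hz hz0
  refine le_of_mul_le_mul_right ?_ (hi₀ ▸ mul_pos hc (hg i₀))
  calc s * z i₀ ≤ (B *ᵥ z) i₀ := hBz i₀
    _ ≤ c * (B *ᵥ g) i₀ := by simpa [mulVec_smul] using mulVec_mono hB hzc i₀
    _ ≤ c * (r * g i₀) := mul_le_mul_of_nonneg_left (hBg i₀) hc.le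
    _ = r * z i₀ := by rw [hi₀]; ring

lemma norm_smul_le_mulVec_norm (hB : ∀ i j, 0 ≤ B i j) {x : n → ℂ} {μ : ℂ}
    (hx : (B.map fun t : ℝ => (t : ℂ)) *ᵥ x = μ • x) :
    ‖μ‖ • (fun i => ‖x i‖) ≤ B *ᵥ fun i => ‖x i‖ := by
  intro i
  calc ‖μ‖ * ‖x i‖ = ‖∑ j, (B i j : ℂ) * x j‖ := by
        rw [← norm_mul, ← smul_eq_mul, ← Pi.smul_apply, ← hx]; rfl
    _ ≤ ∑ j, ‖(B i j : ℂ) * x j‖ := norm_sum_le _ _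
    _ = (B *ᵥ fun i => ‖x i‖) i := by
        simp [mulVec, dotProduct, Complex.norm_real, abs_of_nonneg (hB i _)]

variable [DecidableEq n]

lemma Reaches.refl (B : Matrix n n ℝ) (i : n) : Reaches B i i := ⟨0, by simp⟩

lemma reaches_iff_reflTransGen (hB : ∀ i j, 0 ≤ B i j) {i j : n} :
    Reaches B i j ↔ Relation.ReflTransGen (fun a b => 0 < B a b) i j := by
  constructor
  · rintro ⟨k, hk⟩
    induction k generalizing i with
    | zero =>
      rw [pow_zero, one_apply] at hk
      split_ifs at hk with hij
      · exact hij ▸ .refl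
      · exact (lt_irrefl _ hk).elim
    | succ k ih =>
      rw [pow_succ', mul_apply, Finset.sum_pos_iff_of_nonneg
        fun m _ => mul_nonneg (hB i m) (pow_apply_nonneg hB k m j)] at hk
      obtain ⟨m, -, hm⟩ := hk
      exact .head (pos_of_mul_pos_left hm (pow_apply_nonneg hB k m j))
        (ih (pos_of_mul_pos_right hm (hB i m)))
  · intro hij
    induction hij using Relation.ReflTransGen.head_induction_on with
    | refl => exact Reaches.refl B j
    | head hab _ ih =>
      obtain ⟨k, hk⟩ := ih
      refine ⟨k + 1, ?_⟩
      rw [pow_succ', mul_apply]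
      exact (mul_pos hab hk).trans_le (Finset.single_le_sum
        (fun m _ => mul_nonneg (hB _ m) (pow_apply_nonneg hB k m _)) (Finset.mem_univ _))

lemma Reaches.trans (hB : ∀ i j, 0 ≤ B i j) {i j k : n} (hij : Reaches B i j)
    (hjk : Reaches B j k) : Reaches B i k := by
  rw [reaches_iff_reflTransGen hB] at *
  exact hij.trans hjk

lemma reaches_of_pos {i j : n} (h : 0 < B i j) : Reaches B i j := ⟨1, by simpa using h⟩

lemma exists_exit (hB : ∀ i j, 0 ≤ B i j) {C : Set n} {x u : n} (hx : x ∈ C) (hu : u ∉ C)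
    (hxu : Reaches B x u) : ∃ a ∈ C, ∃ b ∉ C, 0 < B a b ∧ Reaches B b u := by
  rw [reaches_iff_reflTransGen hB] at hxu
  induction hxu using Relation.ReflTransGen.head_induction_on with
  | refl => exact absurd hx hu
  | @head a b hab hbu ih =>
    by_cases hb : b ∈ C
    · exact ih hb
    · exact ⟨a, hx, b, hb, hab, (reaches_iff_reflTransGen hB).mpr hbu⟩

lemma exists_mem_forall_reaches_imp_reaches (hB : ∀ i j, 0 ≤ B i j) {S : Set n}
    (hS : S.Nonempty) : ∃ v ∈ S, ∀ w ∈ S, Reaches B v w → Reaches B w v := by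
  obtain ⟨v, hvS, hmin⟩ := S.toFinite.exists_minimalFor (fun v => {w | Reaches B v w}) S hS
  exact ⟨v, hvS, fun w hw hvw => hmin hw (fun u hu => hvw.trans hB hu) (Reaches.refl B v)⟩

lemma eq_zero_of_reaches (hB : ∀ i j, 0 ≤ B i j) {y : n → ℝ} (hy : 0 ≤ y) {r : ℝ}
    (hBy : B *ᵥ y ≤ r • y) {i j : n} (hij : Reaches B i j) (hi : y i = 0) : y j = 0 := by
  rw [reaches_iff_reflTransGen hB] at hij
  induction hij with
  | refl => exact hi
  | @tail b c _ hbc hb =>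
    have hsum : ∑ m, B b m * y m ≤ 0 := by simpa [mulVec, dotProduct, hb] using hBy b
    have hc : B b c * y c ≤ B b c * 0 := by
      rw [mul_zero]
      exact (Finset.single_le_sum (fun m _ => mul_nonneg (hB b m) (hy m))
        (Finset.mem_univ c)).trans hsum
    exact le_antisymm (le_of_mul_le_mul_left hc hbc) (hy c)

lemma lt_of_smul_le_mulVec (hB : ∀ i j, 0 ≤ B i j) (hirr : ∀ i j, Reaches B i j) {g : n → ℝ}
    (hg : ∀ i, 0 < g i) {r : ℝ} (hBg : B *ᵥ g ≤ r • g) {i₁ : n}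
    (hi₁ : (B *ᵥ g) i₁ < r * g i₁) {z : n → ℝ} (hz : 0 ≤ z) (hz0 : z ≠ 0) {s : ℝ}
    (hBz : s • z ≤ B *ᵥ z) : s < r := by
  refine (le_of_smul_le_mulVec hB hg hBg hz hz0 hBz).lt_of_ne ?_
  rintro rfl
  obtain ⟨c, hc, i₀, hzc, hi₀⟩ := exists_le_smul_eq hg hz hz0
  -- the gap `c • g - z` is a nonnegative subinvariant vector vanishing at `i₀`, hence everywhere
  have hBgap : B *ᵥ (c • g - z) ≤ s • (c • g - z) := by
    rw [mulVec_sub, mulVec_smul, smul_sub, smul_comm s c]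
    exact sub_le_sub (smul_le_smul_of_nonneg_left hBg hc.le) hBz
  have hzi₁ : z i₁ = c * g i₁ := by
    have := eq_zero_of_reaches hB (sub_nonneg.mpr hzc) hBgap (hirr i₀ i₁) (by simp [hi₀])
    simpa [sub_eq_zero, eq_comm] using this
  have := calc s * z i₁ ≤ (B *ᵥ z) i₁ := hBz i₁
    _ ≤ c * (B *ᵥ g) i₁ := by simpa [mulVec_smul] using mulVec_mono hB hzc i₁
    _ < c * (s * g i₁) := mul_lt_mul_of_pos_left hi₁ hc
    _ = s * z i₁ := by rw [hzi₁]; ring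
  exact lt_irrefl _ this

lemma norm_le_of_mem_spectrum (hB : ∀ i j, 0 ≤ B i j) {g : n → ℝ} (hg : ∀ i, 0 < g i) {r : ℝ}
    (hBg : B *ᵥ g ≤ r • g) {μ : ℂ} (hμ : μ ∈ spectrum ℂ (B.map fun t : ℝ => (t : ℂ))) :
    ‖μ‖ ≤ r := by
  obtain ⟨x, hx0, hx⟩ := (mem_spectrum_iff_exists_mulVec_eq_smul _ _).mp hμ
  exact le_of_smul_le_mulVec hB hg hBg (fun i => norm_nonneg (x i))
    (fun h => hx0 (funext fun i => norm_eq_zero.mp (congrFun h i))) (norm_smul_le_mulVec_norm hB hx)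

lemma norm_lt_of_mem_spectrum (hB : ∀ i j, 0 ≤ B i j) (hirr : ∀ i j, Reaches B i j)
    {g : n → ℝ} (hg : ∀ i, 0 < g i) {r : ℝ} (hBg : B *ᵥ g ≤ r • g) {i₁ : n}
    (hi₁ : (B *ᵥ g) i₁ < r * g i₁) {μ : ℂ}
    (hμ : μ ∈ spectrum ℂ (B.map fun t : ℝ => (t : ℂ))) : ‖μ‖ < r := by
  obtain ⟨x, hx0, hx⟩ := (mem_spectrum_iff_exists_mulVec_eq_smul _ _).mp hμ
  exact lt_of_smul_le_mulVec hB hirr hg hBg hi₁ (fun i => norm_nonneg (x i))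
    (fun h => hx0 (funext fun i => norm_eq_zero.mp (congrFun h i))) (norm_smul_le_mulVec_norm hB hx)

lemma specRad_le_of_mulVec_le (hB : ∀ i j, 0 ≤ B i j) {g : n → ℝ} (hg : ∀ i, 0 < g i) {r : ℝ}
    (hr : 0 ≤ r) (hBg : B *ᵥ g ≤ r • g) : specRad B ≤ r :=
  Real.sSup_le (by rintro _ ⟨μ, hμ, rfl⟩; exact norm_le_of_mem_spectrum hB hg hBg hμ) hr

lemma specRad_lt_of_mulVec_le (hB : ∀ i j, 0 ≤ B i j) (hirr : ∀ i j, Reaches B i j)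
    {g : n → ℝ} (hg : ∀ i, 0 < g i) {r : ℝ} (hBg : B *ᵥ g ≤ r • g) {i₁ : n}
    (hi₁ : (B *ᵥ g) i₁ < r * g i₁) : specRad B < r := by
  have : Nonempty n := ⟨i₁⟩
  set M := B.map fun t : ℝ => (t : ℂ)
  have hnorms : {s : ℝ | ∃ μ ∈ spectrum ℂ M, s = ‖μ‖} = (‖·‖) '' spectrum ℂ M := by
    ext s; simp [eq_comm]
  obtain ⟨μ, hμ⟩ := spectrum.nonempty_of_isAlgClosed_of_finiteDimensional ℂ M
  rw [specRad, hnorms, ((finite_spectrum M).image _).csSup_lt_iff ⟨_, μ, hμ, rfl⟩]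
  rintro _ ⟨μ, hμ, rfl⟩
  exact norm_lt_of_mem_spectrum hB hirr hg hBg hi₁ hμ

lemma specRad_eq_of_mulVec_eq [Nonempty n] (hB : ∀ i j, 0 ≤ B i j) {g : n → ℝ}
    (hg : ∀ i, 0 < g i) {r : ℝ} (hr : 0 ≤ r) (hBg : B *ᵥ g = r • g) : specRad B = r := by
  have hmem : (r : ℂ) ∈ spectrum ℂ (B.map fun t : ℝ => (t : ℂ)) := by
    refine (mem_spectrum_iff_exists_mulVec_eq_smul _ _).mpr
      ⟨fun i => (g i : ℂ), fun h => (hg (Classical.arbitrary n)).ne' ?_, ?_⟩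
    · simpa using congrFun h (Classical.arbitrary n)
    · ext i
      have := congrFun hBg i
      simp only [mulVec, dotProduct, Pi.smul_apply, smul_eq_mul, map_apply] at this ⊢
      exact_mod_cast this
  refine le_antisymm (specRad_le_of_mulVec_le hB hg hr hBg.le) (le_csSup ?_ ⟨r, hmem, ?_⟩)
  · exact ⟨r, by rintro _ ⟨μ, hμ, rfl⟩; exact norm_le_of_mem_spectrum hB hg hBg.le hμ⟩
  · rw [Complex.norm_real, Real.norm_of_nonneg hr]

end Nonneg

section Components

variable {A : Matrix V V ℝ}

lemma mem_sccOf_self (A : Matrix V V ℝ) (v : V) : v ∈ sccOf A v :=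
  ⟨Reaches.refl A v, Reaches.refl A v⟩

lemma sccOf_eq_of_mem (hA : ∀ i j, 0 ≤ A i j) {u v : V} (hu : u ∈ sccOf A v) :
    sccOf A u = sccOf A v := by
  ext w
  exact ⟨fun hw => ⟨hu.1.trans hA hw.1, hw.2.trans hA hu.2⟩,
    fun hw => ⟨hu.2.trans hA hw.1, hw.2.trans hA hu.1⟩⟩

lemma reaches_subMat_sccOf (hA : ∀ i j, 0 ≤ A i j) (v : V) (i j : sccOf A v) :
    Reaches (subMat A (sccOf A v)) i j := by
  obtain ⟨i, hi⟩ := i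
  obtain ⟨j, hj⟩ := j
  rw [reaches_iff_reflTransGen (B := subMat A (sccOf A v)) fun a b => hA a b]
  have hij := (reaches_iff_reflTransGen hA).mp (hi.2.trans hA hj.1)
  induction hij using Relation.ReflTransGen.head_induction_on with
  | refl => exact .refl
  | @head a b hab hbj ih =>
    have hb : b ∈ sccOf A v :=
      ⟨hi.1.trans hA (reaches_of_pos hab), ((reaches_iff_reflTransGen hA).mpr hbj).trans hA hj.2⟩
    exact .head (show 0 < subMat A (sccOf A v) ⟨a, hi⟩ ⟨b, hb⟩ from hab) (ih hb)

lemma subMat_mulVec_add_sum_compl (A : Matrix V V ℝ) (C : Set V) (x : V → ℝ) (i : C) :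
    (subMat A C *ᵥ fun j : C => x j) i + ∑ j ∈ C.toFinsetᶜ, A i j * x j = (A *ᵥ x) i := by
  simp only [mulVec, dotProduct]
  rw [← Finset.sum_add_sum_compl C.toFinset (fun j => A i j * x j)]
  congr 1
  exact (Finset.sum_subtype _ (fun _ => Set.mem_toFinset) (fun j => A i j * x j)).symm

end Components

section Support

variable {A : Matrix V V ℝ} {r : ℝ} {h : V → ℝ}

lemma pos_of_reaches (hA : ∀ i j, 0 ≤ A i j) (hh : 0 ≤ h) (hAh : A *ᵥ h ≤ r • h) {w u : V}
    (hwu : Reaches A w u) (hu : 0 < h u) : 0 < h w :=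
  (hh w).lt_of_ne' fun hw => hu.ne' (eq_zero_of_reaches hA hh hAh hwu hw)

lemma sccOf_subset_of_pos (hA : ∀ i j, 0 ≤ A i j) (hh : 0 ≤ h) (hAh : A *ᵥ h ≤ r • h)
    {u v : V} (hu : u ∈ sccOf A v) (hu0 : 0 < h u) : sccOf A v ⊆ {w | 0 < h w} :=
  fun _ hw => pos_of_reaches hA hh hAh (hw.2.trans hA hu.1) hu0

lemma subMat_mulVec_le (hA : ∀ i j, 0 ≤ A i j) (hh : 0 ≤ h) (hAh : A *ᵥ h ≤ r • h)
    (C : Set V) : subMat A C *ᵥ (fun j : C => h j) ≤ r • fun j : C => h j := by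
  intro i
  have hsplit := subMat_mulVec_add_sum_compl A C h i
  have hout : 0 ≤ ∑ j ∈ C.toFinsetᶜ, A i j * h j :=
    Finset.sum_nonneg fun j _ => mul_nonneg (hA i j) (hh j)
  have hi := hAh i
  simp only [Pi.smul_apply, smul_eq_mul] at hi ⊢
  linarith

lemma specRadSub_le (hA : ∀ i j, 0 ≤ A i j) (hh : 0 ≤ h) (hAh : A *ᵥ h ≤ r • h) (hr : 0 ≤ r)
    {C : Set V} (hC : C ⊆ {w | 0 < h w}) : specRadSub A C ≤ r :=
  specRad_le_of_mulVec_le (B := subMat A C) (fun i j => hA i j) (fun j => hC j.2) hr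
    (subMat_mulVec_le hA hh hAh C)

lemma specRadSub_lt (hA : ∀ i j, 0 ≤ A i j) (hh : 0 ≤ h) (hAh : A *ᵥ h ≤ r • h) {v a b : V}
    (hC : sccOf A v ⊆ {w | 0 < h w}) (ha : a ∈ sccOf A v) (hb : b ∉ sccOf A v)
    (hab : 0 < A a b) (hb0 : 0 < h b) : specRadSub A (sccOf A v) < r := by
  refine specRad_lt_of_mulVec_le (B := subMat A (sccOf A v)) (fun i j => hA i j)
    (reaches_subMat_sccOf hA v) (fun j => hC j.2) (subMat_mulVec_le hA hh hAh _) (i₁ := ⟨a, ha⟩) ?_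
  have hsplit := subMat_mulVec_add_sum_compl A (sccOf A v) h ⟨a, ha⟩
  have hout : A a b * h b ≤ ∑ j ∈ (sccOf A v).toFinsetᶜ, A a j * h j :=
    Finset.single_le_sum (fun j _ => mul_nonneg (hA a j) (hh j)) (by simpa using hb)
  have hi := hAh a
  simp only [Pi.smul_apply, smul_eq_mul] at hi
  linarith [mul_pos hab hb0]

lemma isMinSCC_sccOf (hA : ∀ i j, 0 ≤ A i j) (hh : 0 ≤ h) (hAh : A *ᵥ h ≤ r • h) {v : V}
    (hC : sccOf A v ⊆ {w | 0 < h w}) (hρ : specRadSub A (sccOf A v) = r) :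
    IsMinSCC A (sccOf A v) := by
  refine ⟨⟨v, rfl⟩, ?_⟩
  rintro _ ⟨v', rfl⟩ hne ⟨x, hx, u, hu, hxu⟩
  have hu0 : 0 < h u := hC hu
  have hu' : u ∉ sccOf A v' := fun hu' =>
    hne ((sccOf_eq_of_mem hA hu').symm.trans (sccOf_eq_of_mem hA hu))
  obtain ⟨a, ha, b, hb, hab, hbu⟩ := exists_exit hA hx hu' hxu
  have hC' := sccOf_subset_of_pos hA hh hAh hx (pos_of_reaches hA hh hAh hxu hu0)
  rw [hρ]
  exact specRadSub_lt hA hh hAh hC' ha hb hab (pos_of_reaches hA hh hAh hbu hu0)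

lemma subMat_mulVec_eq (hA : ∀ i j, 0 ≤ A i j) (hh : 0 ≤ h) (hAh : A *ᵥ h = r • h) {v : V}
    (hv : ∀ w, 0 < h w → Reaches A v w → Reaches A w v) :
    subMat A (sccOf A v) *ᵥ (fun j : sccOf A v => h j) = r • fun j : sccOf A v => h j := by
  ext i
  have hsplit := subMat_mulVec_add_sum_compl A (sccOf A v) h i
  have hout : ∑ j ∈ (sccOf A v).toFinsetᶜ, A i j * h j = 0 := by
    refine Finset.sum_eq_zero fun j hj => ?_
    by_contra hne
    have hj0 : 0 < h j := (hh j).lt_of_ne' (right_ne_zero_of_mul hne)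
    have hij : 0 < A i j := (hA i j).lt_of_ne' (left_ne_zero_of_mul hne)
    have hvj : Reaches A v j := i.2.1.trans hA (reaches_of_pos hij)
    exact (by simpa using hj : j ∉ sccOf A v) ⟨hvj, hv j hj0 hvj⟩
  rw [hout, add_zero, hAh] at hsplit
  exact hsplit

lemma exists_isMinSCC_specRadSub_eq (hA : ∀ i j, 0 ≤ A i j) (hh : 0 ≤ h) (hh0 : h ≠ 0)
    (hAh : A *ᵥ h = r • h) (hr : 0 ≤ r) : ∃ C, IsMinSCC A C ∧ specRadSub A C = r := by
  obtain ⟨u, hu⟩ := Function.ne_iff.mp hh0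
  obtain ⟨v, hv0, hv⟩ := exists_mem_forall_reaches_imp_reaches hA (S := {w | 0 < h w})
    ⟨u, (hh u).lt_of_ne' hu⟩
  have hC := sccOf_subset_of_pos hA hh hAh.le (mem_sccOf_self A v) hv0
  have : Nonempty (sccOf A v) := ⟨⟨v, mem_sccOf_self A v⟩⟩
  have hρ : specRadSub A (sccOf A v) = r :=
    specRad_eq_of_mulVec_eq (B := subMat A (sccOf A v)) (fun i j => hA i j) (fun j => hC j.2) hr
      (subMat_mulVec_eq hA hh hAh hv)
  exact ⟨_, isMinSCC_sccOf hA hh hAh.le hC hρ, hρ⟩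

end Support

theorem stmt13_general {V : Type*} [Fintype V] [DecidableEq V]
    (A : Matrix V V ℝ) (hA : ∀ i j, 0 ≤ A i j)
    (β : ℝ) (h : V → ℝ) (hne : h ≠ 0) (hpos : ∀ u, 0 ≤ h u)
    (hharm : A.mulVec h = Real.exp β • h) :
    (∃ C : Set V, IsMinSCC A C ∧ specRadSub A C = Real.exp β) ∧
    (∀ C : Set V, IsSCC A C → Real.exp β < specRadSub A C → ∀ u ∈ C, h u = 0) ∧
    (∀ C : Set V, IsSCC A C → specRadSub A C = Real.exp β → ¬ IsMinSCC A C →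
      ∀ u ∈ C, h u = 0) := by
  have hr : 0 ≤ Real.exp β := (Real.exp_pos β).le
  have hsupp {v u : V} (hu : u ∈ sccOf A v) (hu0 : h u ≠ 0) : sccOf A v ⊆ {w | 0 < h w} :=
    sccOf_subset_of_pos hA hpos hharm.le hu ((hpos u).lt_of_ne' hu0)
  refine ⟨exists_isMinSCC_specRadSub_eq hA hpos hne hharm hr, ?_, ?_⟩
  · rintro _ ⟨v, rfl⟩ hρ u hu
    by_contra hu0
    exact (specRadSub_le hA hpos hharm.le hr (hsupp hu hu0)).not_gt hρ
  · rintro _ ⟨v, rfl⟩ hρ hmin u hu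
    by_contra hu0
    exact hmin (isMinSCC_sccOf hA hpos hharm.le (hsupp hu hu0) hρ)

/-- if `β > 0` and `h ≠ 0` is a nonnegative vector with `A h = e^β h`, then
(a) some minimal strongly connected component `C` has `ρ(A_C) = e^β`; (b) `h` vanishes on every
strongly connected component with `ρ(A_C) > e^β`; and (c) `h` vanishes on every non-minimal
strongly connected component with `ρ(A_C) = e^β`. -/
theorem stmt13 {V : Type*} [Fintype V] [DecidableEq V] [Nonempty V]
    (A : Matrix V V ℝ) (hA : ∀ i j, 0 ≤ A i j)
    (β : ℝ) (hβ : 0 < β) (h : V → ℝ) (hne : h ≠ 0) (hpos : ∀ u, 0 ≤ h u)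
    (hharm : A.mulVec h = Real.exp β • h) :
    (∃ C : Set V, IsMinSCC A C ∧ specRadSub A C = Real.exp β) ∧
    (∀ C : Set V, IsSCC A C → Real.exp β < specRadSub A C → ∀ u ∈ C, h u = 0) ∧
    (∀ C : Set V, IsSCC A C → specRadSub A C = Real.exp β → ¬ IsMinSCC A C →
      ∀ u ∈ C, h u = 0) :=
  stmt13_general A hA β h hne hpos hharm
end
end

section
/- Let v ∈ V and suppose x_v := sup{x > 0 : Z_v(x) < ∞} satisfies 0 < x_v < ∞. Then for every w ∈ V the limit of Z_{w,v}(x)/Z_v(x) as x → x_v from the left exists and lies in [0,1] (the quotient taken in [0,∞]; note Z_v(x) ≥ 1 since (A⁰)_{v,v} = 1). -/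
open Filter Topology ENNReal

noncomputable section

attribute [local instance] setFintypeAux

variable {V : Type*} [Fintype V] [DecidableEq V]

/-- `x_v := sup {x > 0 : Z_v(x) < ∞}`. -/
def critTemp (A : Matrix V V ℝ) (v : V) : ℝ :=
  sSup {x : ℝ | 0 < x ∧ Zvert A v x < ⊤}

/-! For `0 < x < x_v` the column series `g(x) = ∑ₖ xᵏ Aᵏ e_v` converges and solves
`(1 - x A) g = e_v`, so by Cramer's rule `det (1 - x A) · g_w(x) = adj (1 - x A)_{w v}`. Away from
the finitely many zeros of `det (1 - x A)` the quotient `Z_{w,v}(x) / Z_v(x)` is therefore the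
rational function `adj_{w v} / ∑ᵤ adj_{u v}`. This function is meromorphic at `x_v` and stays in
`[0, 1]` on the left of it, so it has nonnegative order there and hence a limit. -/

open Polynomial

theorem Polynomial.analyticAt_eval {𝕜 : Type*} [NontriviallyNormedField 𝕜] (p : 𝕜[X]) (z : 𝕜) :
    AnalyticAt 𝕜 (fun x => p.eval x) z := by
  have := (analyticAt_id (𝕜 := 𝕜) (z := z)).aeval_polynomial (A := 𝕜) p
  simp only [id, coe_aeval_eq_eval] at this
  exact this

theorem MeromorphicAt.exists_mem_tendsto_of_eventually_mem {𝕜 E : Type*}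
    [NontriviallyNormedField 𝕜] [NormedAddCommGroup E] [NormedSpace 𝕜 E] {f : 𝕜 → E} {x : 𝕜}
    {l : Filter 𝕜} [l.NeBot] {s : Set E} (hf : MeromorphicAt f x) (hl : l ≤ 𝓝[≠] x)
    (hs : Bornology.IsBounded s) (hsc : IsClosed s) (h : ∀ᶠ y in l, f y ∈ s) :
    ∃ c ∈ s, Tendsto f l (𝓝 c) := by
  have hord : 0 ≤ meromorphicOrderAt f x := by
    by_contra! hneg
    have hcob := (tendsto_cobounded_of_meromorphicOrderAt_neg hneg).mono_left hl
    obtain ⟨y, hys, hys'⟩ := (Eventually.and (hcob hs) h).exists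
    exact hys hys'
  obtain ⟨c, hc⟩ := tendsto_nhds_of_meromorphicOrderAt_nonneg hf hord
  exact ⟨c, hsc.mem_of_tendsto (hc.mono_left hl) h, hc.mono_left hl⟩

namespace Matrix

theorem map_evalRingHom_one_sub_X_smul {n R : Type*} [DecidableEq n] [CommRing R]
    (M : Matrix n n R) (x : R) :
    (1 - (X : R[X]) • M.map C).map (evalRingHom x) = 1 - x • M := by
  ext i j
  by_cases h : i = j <;> simp [h] <;> ring

variable {n : Type*} [Fintype n] [DecidableEq n]

theorem eval_charpolyRev_eq_det {R : Type*} [CommRing R] (M : Matrix n n R) (x : R) :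
    M.charpolyRev.eval x = (1 - x • M).det := by
  rw [charpolyRev, ← coe_evalRingHom, RingHom.map_det, RingHom.mapMatrix_apply,
    map_evalRingHom_one_sub_X_smul]

theorem eval_adjugate_one_sub_X_smul {R : Type*} [CommRing R] (M : Matrix n n R) (x : R)
    (i j : n) : ((1 - (X : R[X]) • M.map C).adjugate i j).eval x = (1 - x • M).adjugate i j := by
  rw [← map_evalRingHom_one_sub_X_smul M x, ← RingHom.mapMatrix_apply (evalRingHom x),
    ← RingHom.map_adjugate]
  rfl

theorem analyticAt_adjugate_one_sub_smul {𝕜 : Type*} [NontriviallyNormedField 𝕜]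
    (M : Matrix n n 𝕜) (i j : n) (z : 𝕜) :
    AnalyticAt 𝕜 (fun x => (1 - x • M).adjugate i j) z := by
  simpa only [eval_adjugate_one_sub_X_smul] using
    Polynomial.analyticAt_eval ((1 - (X : 𝕜[X]) • M.map C).adjugate i j) z

theorem eventually_det_one_sub_smul_ne_zero {K : Type*} [Field K] [TopologicalSpace K]
    [T1Space K] (M : Matrix n n K) (z : K) : ∀ᶠ x in 𝓝[≠] z, (1 - x • M).det ≠ 0 := by
  have hne : M.charpolyRev ≠ 0 := fun h => by simpa [h] using M.eval_charpolyRev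
  filter_upwards [nhdsNE_le_cofinite z (finite_setOfPred_isRoot hne).compl_mem_cofinite] with x hx
  simpa [eval_charpolyRev_eq_det] using hx

variable {R : Type*} [CommRing R] [TopologicalSpace R] [IsTopologicalRing R] [T2Space R]

theorem one_sub_smul_mulVec_tsum {A : Matrix n n R} {x : R} {v : n}
    (hs : ∀ u, Summable fun k => x ^ k * (A ^ k) u v) :
    (1 - x • A) *ᵥ (fun u => ∑' k, x ^ k * (A ^ k) u v) = Pi.single v 1 := by
  ext w
  have hstep : ∀ k, x ^ (k + 1) * (A ^ (k + 1)) w v = ∑ u, x * A w u * (x ^ k * (A ^ k) u v) := by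
    intro k
    rw [pow_succ' A, mul_apply, Finset.mul_sum, pow_succ']
    exact Finset.sum_congr rfl fun u _ => by ring
  have hrec : ∑' k, x ^ k * (A ^ k) w v
      = (1 : Matrix n n R) w v + ∑ u, x * A w u * ∑' k, x ^ k * (A ^ k) u v := by
    rw [(hs w).tsum_eq_zero_add, tsum_congr hstep,
      Summable.tsum_finsetSum fun u _ => (hs u).mul_left _]
    simp only [pow_zero, one_mul, (hs _).tsum_mul_left]
  rw [sub_mulVec, one_mulVec, Pi.sub_apply, hrec, Pi.single_apply, one_apply]
  simp [mulVec, dotProduct]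

theorem det_one_sub_smul_mul_tsum {A : Matrix n n R} {x : R} {v : n}
    (hs : ∀ u, Summable fun k => x ^ k * (A ^ k) u v) (w : n) :
    (1 - x • A).det * ∑' k, x ^ k * (A ^ k) w v = (1 - x • A).adjugate w v := by
  have h := congrArg ((1 - x • A).adjugate *ᵥ ·) (one_sub_smul_mulVec_tsum hs)
  simp only [mulVec_mulVec, adjugate_mul, smul_mulVec, one_mulVec, mulVec_single_one] at h
  exact congrFun h w

end Matrix

/-- This is the junk value `0` where the series diverges. -/
def Zreal (A : Matrix V V ℝ) (w v : V) (x : ℝ) : ℝ := ∑' k : ℕ, x ^ k * (A ^ k) w v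

section Zfun

variable {A : Matrix V V ℝ} {w v : V} {x : ℝ}

theorem pow_mul_pow_apply_nonneg (hA : ∀ i j, 0 ≤ A i j) (hx : 0 ≤ x) (k : ℕ) :
    0 ≤ x ^ k * (A ^ k) w v :=
  mul_nonneg (pow_nonneg hx k) (Matrix.pow_apply_nonneg hA k w v)

theorem summable_of_Zfun_ne_top (hA : ∀ i j, 0 ≤ A i j) (hx : 0 ≤ x) (h : Zfun A w v x ≠ ⊤) :
    Summable fun k => x ^ k * (A ^ k) w v := by
  simpa [ENNReal.toReal_ofReal (pow_mul_pow_apply_nonneg hA hx _)] using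
    ENNReal.summable_toReal h

theorem Zfun_eq_ofReal_Zreal (hA : ∀ i j, 0 ≤ A i j) (hx : 0 ≤ x) (h : Zfun A w v x ≠ ⊤) :
    Zfun A w v x = ENNReal.ofReal (Zreal A w v x) :=
  (ENNReal.ofReal_tsum_of_nonneg (pow_mul_pow_apply_nonneg hA hx)
    (summable_of_Zfun_ne_top hA hx h)).symm

theorem Zreal_nonneg (hA : ∀ i j, 0 ≤ A i j) (hx : 0 ≤ x) : 0 ≤ Zreal A w v x :=
  tsum_nonneg (pow_mul_pow_apply_nonneg hA hx)

theorem Zfun_mono (hA : ∀ i j, 0 ≤ A i j) {y : ℝ} (hx : 0 ≤ x) (hxy : x ≤ y) :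
    Zfun A w v x ≤ Zfun A w v y :=
  ENNReal.tsum_le_tsum fun k => ENNReal.ofReal_le_ofReal <|
    mul_le_mul_of_nonneg_right (pow_le_pow_left₀ hx hxy k) (Matrix.pow_apply_nonneg hA k w v)

theorem Zfun_le_Zvert : Zfun A w v x ≤ Zvert A v x :=
  Finset.single_le_sum (f := fun u => Zfun A u v x) (fun _ _ => zero_le) (Finset.mem_univ w)

theorem Zvert_lt_top_of_lt_critTemp (hA : ∀ i j, 0 ≤ A i j)
    (hne : {x : ℝ | 0 < x ∧ Zvert A v x < ⊤}.Nonempty) (hx : 0 ≤ x) (hxv : x < critTemp A v) :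
    Zvert A v x < ⊤ := by
  obtain ⟨y, ⟨-, hy⟩, hxy⟩ := exists_lt_of_lt_csSup hne hxv
  exact lt_of_le_of_lt (Finset.sum_le_sum fun u _ => Zfun_mono hA hx hxy.le) hy

theorem summable_of_Zvert_ne_top (hA : ∀ i j, 0 ≤ A i j) (hx : 0 ≤ x) (h : Zvert A v x ≠ ⊤)
    (u : V) : Summable fun k => x ^ k * (A ^ k) u v :=
  summable_of_Zfun_ne_top hA hx (ne_top_of_le_ne_top h Zfun_le_Zvert)

theorem one_le_sum_Zreal (hA : ∀ i j, 0 ≤ A i j) (hx : 0 ≤ x)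
    (hs : Summable fun k => x ^ k * (A ^ k) v v) : 1 ≤ ∑ u, Zreal A u v x := calc
  1 ≤ Zreal A v v x := by
    simpa [Zreal] using hs.le_tsum 0 fun k _ => pow_mul_pow_apply_nonneg hA hx k
  _ ≤ ∑ u, Zreal A u v x :=
    Finset.single_le_sum (fun u _ => Zreal_nonneg (w := u) hA hx) (Finset.mem_univ v)

theorem Zreal_div_sum_mem_Icc (hA : ∀ i j, 0 ≤ A i j) (hx : 0 ≤ x)
    (hs : Summable fun k => x ^ k * (A ^ k) v v) :
    Zreal A w v x / ∑ u, Zreal A u v x ∈ Set.Icc 0 1 := by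
  have hpos := zero_lt_one.trans_le (one_le_sum_Zreal hA hx hs)
  exact ⟨div_nonneg (Zreal_nonneg hA hx) hpos.le, div_le_one_of_le₀
    (Finset.single_le_sum (fun u _ => Zreal_nonneg (w := u) hA hx) (Finset.mem_univ w)) hpos.le⟩

theorem Zfun_div_Zvert_eq_ofReal (hA : ∀ i j, 0 ≤ A i j) (hx : 0 ≤ x) (h : Zvert A v x ≠ ⊤) :
    Zfun A w v x / Zvert A v x = ENNReal.ofReal (Zreal A w v x / ∑ u, Zreal A u v x) := by
  have hfin (u : V) : Zfun A u v x ≠ ⊤ := ne_top_of_le_ne_top h Zfun_le_Zvert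
  rw [ENNReal.ofReal_div_of_pos
      (zero_lt_one.trans_le (one_le_sum_Zreal hA hx (summable_of_Zvert_ne_top hA hx h v))),
    ENNReal.ofReal_sum_of_nonneg fun u _ => Zreal_nonneg hA hx, Zvert]
  simp only [Zfun_eq_ofReal_Zreal hA hx (hfin _)]

theorem Zreal_div_sum_eq_adjugate (hs : ∀ u, Summable fun k => x ^ k * (A ^ k) u v)
    (hdet : (1 - x • A).det ≠ 0) :
    Zreal A w v x / ∑ u, Zreal A u v x
      = (1 - x • A).adjugate w v / ∑ u, (1 - x • A).adjugate u v := by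
  simp only [← Matrix.det_one_sub_smul_mul_tsum hs, ← Finset.mul_sum, Zreal]
  rw [mul_div_mul_left _ _ hdet]

end Zfun

theorem stmt17_general {V : Type*} [Fintype V] [DecidableEq V]
    (A : Matrix V V ℝ) (hA : ∀ i j, 0 ≤ A i j) (v : V)
    (hne : {x : ℝ | 0 < x ∧ Zvert A v x < ⊤}.Nonempty)
    (hbdd : BddAbove {x : ℝ | 0 < x ∧ Zvert A v x < ⊤}) :
    ∀ w : V, ∃ L : ℝ≥0∞, L ≤ 1 ∧
      Filter.Tendsto (fun x => Zfun A w v x / Zvert A v x)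
        (𝓝[<] critTemp A v) (𝓝 L) := by
  intro w
  obtain ⟨x₀, hx₀⟩ := hne
  have hpos : 0 < critTemp A v := hx₀.1.trans_le (le_csSup hbdd hx₀)
  set F : ℝ → ℝ := fun x => (1 - x • A).adjugate w v / ∑ u, (1 - x • A).adjugate u v
  have hF : MeromorphicAt F (critTemp A v) :=
    (Matrix.analyticAt_adjugate_one_sub_smul A w v _).meromorphicAt.div
      (Finset.analyticAt_fun_sum _ fun u _ =>
        Matrix.analyticAt_adjugate_one_sub_smul A u v _).meromorphicAt
  have hev : ∀ᶠ x in 𝓝[<] critTemp A v,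
      Zfun A w v x / Zvert A v x = ENNReal.ofReal (F x) ∧ F x ∈ Set.Icc 0 1 := by
    filter_upwards [Ioo_mem_nhdsLT hpos, (nhdsLT_le_nhdsNE _)
      (Matrix.eventually_det_one_sub_smul_ne_zero A (critTemp A v))] with x hx hdet
    have hfin := (Zvert_lt_top_of_lt_critTemp hA ⟨x₀, hx₀⟩ hx.1.le hx.2).ne
    have hs := summable_of_Zvert_ne_top hA hx.1.le hfin
    have hF_eq : F x = Zreal A w v x / ∑ u, Zreal A u v x :=
      (Zreal_div_sum_eq_adjugate hs hdet).symm
    rw [hF_eq]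
    exact ⟨Zfun_div_Zvert_eq_ofReal hA hx.1.le hfin, Zreal_div_sum_mem_Icc hA hx.1.le (hs v)⟩
  obtain ⟨c, hc, hlim⟩ := hF.exists_mem_tendsto_of_eventually_mem (nhdsLT_le_nhdsNE _)
    (Metric.isBounded_Icc 0 1) isClosed_Icc (hev.mono fun _ h => h.2)
  exact ⟨ENNReal.ofReal c, ENNReal.ofReal_le_one.2 hc.2,
    ((ENNReal.continuous_ofReal.tendsto c).comp hlim).congr' (hev.mono fun _ h => h.1.symm)⟩

/-- if `0 < x_v < ∞` (i.e. the set `{x > 0 : Z_v(x) < ∞}` is nonempty and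
bounded above), then for every `w` the limit of `Z_{w,v}(x)/Z_v(x)` as `x → x_v` from the
left exists and lies in `[0,1]`. -/
theorem stmt17 {V : Type*} [Fintype V] [DecidableEq V] [Nonempty V]
    (A : Matrix V V ℝ) (hA : ∀ i j, 0 ≤ A i j) (v : V)
    (hne : {x : ℝ | 0 < x ∧ Zvert A v x < ⊤}.Nonempty)
    (hbdd : BddAbove {x : ℝ | 0 < x ∧ Zvert A v x < ⊤}) :
    ∀ w : V, ∃ L : ℝ≥0∞, L ≤ 1 ∧
      Filter.Tendsto (fun x => Zfun A w v x / Zvert A v x)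
        (𝓝[<] critTemp A v) (𝓝 L) :=
  stmt17_general A hA v hne hbdd
end
end
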